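/- The automaton constructed from a graph in the alphabet-of-linear-size reduction is weakly acyclic: all of its cycles are self-loops. -/
import Mathlib


def deltaStar {Q A : Type*} (δ : Q → A → Q) (q : Q) (w : List A) : Q :=
  w.foldl δ q

def IsSyncSet {Q A : Type*} (δ : Q → A → Q) (S : Set Q) : Prop :=
  ∃ (w : List A) (q : Q), ∀ s ∈ S, deltaStar δ s w = q

/-- States of the automaton built from a graph on p vertices:
states s_i, t_i (i < p) and a sink-target state f. -/
inductive St (p : ℕ) : Type where
  | s : Fin p → St p
  | t : Fin p → St p
  | f : St p
deriving DecidableEq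

/-- Transitions: letter j sends s_j to f, sends s_i to t_i when v_i v_j ∈ E,
and all other transitions are self-loops. -/
def gDelta {p : ℕ} (G : SimpleGraph (Fin p)) [DecidableRel G.Adj] :
    St p → Fin p → St p
  | St.s i, j => if i = j then St.f else if G.Adj i j then St.t i else St.s i
  | St.t i, _ => St.t i
  | St.f, _ => St.f

/-- Rank of a state: s-states have rank 0, all others rank 1. -/
def stRank {p : ℕ} : St p → ℕ
  | St.s _ => 0
  | _ => 1

lemma gDelta_self_or_lt {p : ℕ} (G : SimpleGraph (Fin p)) [DecidableRel G.Adj]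
    (st : St p) (a : Fin p) :
    gDelta G st a = st ∨ stRank st < stRank (gDelta G st a) := by
  cases st with
  | s i =>
    simp only [gDelta]
    split
    · right; simp [stRank]
    · split
      · right; simp [stRank]
      · left; rfl
  | t i => left; rfl
  | f => left; rfl

lemma mod_succ_mod (a m : ℕ) : ((a % m) + 1) % m = (a + 1) % m := by
  conv_rhs => rw [Nat.add_mod]
  rw [Nat.add_mod (a % m) 1, Nat.mod_mod_of_dvd _ (dvd_refl m)]

/-- The automaton built from G is weakly acyclic: every cycle is a self-loop,
i.e. all states in any cycle coincide. -/
theorem stmt_10 {p : ℕ} (G : SimpleGraph (Fin p)) [DecidableRel G.Adj] :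
    ∀ (m : ℕ) (hm : 0 < m) (q : Fin m → St p) (x : Fin m → Fin p),
      (∀ i : Fin m, gDelta G (q i) (x i) = q ⟨(i.val + 1) % m, Nat.mod_lt _ hm⟩) →
      ∀ i j, q i = q j := by
  intro m hm q x hstep i j
  -- rank is nondecreasing along each step
  have hmono : ∀ i : Fin m, stRank (q i) ≤ stRank (q ⟨(i.val + 1) % m, Nat.mod_lt _ hm⟩) := by
    intro i
    rcases gDelta_self_or_lt G (q i) (x i) with h | h
    · rw [← hstep i, h]
    · rw [← hstep i]; exact h.le
  -- rank nondecreasing along k steps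
  have hge : ∀ (k : ℕ) (i : Fin m),
      stRank (q i) ≤ stRank (q ⟨(i.val + k) % m, Nat.mod_lt _ hm⟩) := by
    intro k
    induction k with
    | zero =>
      intro i
      have : (⟨(i.val + 0) % m, Nat.mod_lt _ hm⟩ : Fin m) = i := by
        apply Fin.ext; simp [Nat.mod_eq_of_lt i.isLt]
      rw [this]
    | succ k ih =>
      intro i
      have h1 := ih i
      have h2 := hmono ⟨(i.val + k) % m, Nat.mod_lt _ hm⟩
      have heq : (⟨((i.val + k) % m + 1) % m, Nat.mod_lt _ hm⟩ : Fin m)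
          = ⟨(i.val + (k + 1)) % m, Nat.mod_lt _ hm⟩ := by
        apply Fin.ext
        simp only
        rw [mod_succ_mod, ← Nat.add_assoc]
      rw [heq] at h2
      exact h1.trans h2
  -- hence all ranks equal
  have hrank : ∀ a b : Fin m, stRank (q a) ≤ stRank (q b) := by
    intro a b
    have h := hge (b.val + m - a.val) a
    have heq : (⟨(a.val + (b.val + m - a.val)) % m, Nat.mod_lt _ hm⟩ : Fin m) = b := by
      apply Fin.ext
      simp only
      have ha : a.val ≤ b.val + m := le_trans a.isLt.le (Nat.le_add_left m b.val)
      rw [Nat.add_sub_cancel' ha, Nat.add_mod_right, Nat.mod_eq_of_lt b.isLt]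
    rwa [heq] at h
  -- each step is a self-loop
  have hself : ∀ i : Fin m, q ⟨(i.val + 1) % m, Nat.mod_lt _ hm⟩ = q i := by
    intro i
    rcases gDelta_self_or_lt G (q i) (x i) with h | h
    · rw [← hstep i, h]
    · rw [hstep i] at h
      exact absurd (hrank ⟨(i.val + 1) % m, Nat.mod_lt _ hm⟩ i) (not_le.mpr h)
  -- propagate along k steps
  have hconst : ∀ (k : ℕ) (i : Fin m), q ⟨(i.val + k) % m, Nat.mod_lt _ hm⟩ = q i := by
    intro k
    induction k with
    | zero =>
      intro i
      congr 1
      apply Fin.ext; simp [Nat.mod_eq_of_lt i.isLt]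
    | succ k ih =>
      intro i
      have h2 := hself ⟨(i.val + k) % m, Nat.mod_lt _ hm⟩
      have heq : (⟨((i.val + k) % m + 1) % m, Nat.mod_lt _ hm⟩ : Fin m)
          = ⟨(i.val + (k + 1)) % m, Nat.mod_lt _ hm⟩ := by
        apply Fin.ext
        simp only
        rw [mod_succ_mod, ← Nat.add_assoc]
      rw [heq] at h2
      rw [h2, ih i]
  have h := hconst (j.val + m - i.val) i
  have heq : (⟨(i.val + (j.val + m - i.val)) % m, Nat.mod_lt _ hm⟩ : Fin m) = j := by
    apply Fin.ext
    simp only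
    have ha : i.val ≤ j.val + m := le_trans i.isLt.le (Nat.le_add_left m j.val)
    rw [Nat.add_sub_cancel' ha, Nat.add_mod_right, Nat.mod_eq_of_lt j.isLt]
  rw [heq] at h
  exact h.symm
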